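/- arXiv:2409.09133 — 3 statements merged into one kernel-verified Lean document; each statement's English description precedes it below -/
import Mathlib

section
/- Let c₂(n) count monotone lattice paths of length n in a strip of height 2 (paths from (0,0) with steps N=(0,1), S=(0,-1), E=(1,0), never immediately retracing a step, staying in 0 ≤ y ≤ 2). Then the generating function satisfies (1-2x+x²-x³-x⁴)·∑ₙ c₂(n)xⁿ = 1+x²+x³; in particular c₂(0)=1, c₂(1)=2, c₂(2)=4, c₂(3)=8, c₂(4)=15, c₂(5)=28, c₂(6)=53, c₂(7)=101. -/
/-- A height sequence encoding a monotone path of length `n` in a strip of height `m`. -/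
def IsMonotonePath (m n : ℕ) (h : Fin (n+1) → Fin (m+1)) : Prop :=
  (h 0 : ℕ) = 0 ∧
  (∀ i : Fin n, ((h i.succ : ℤ) - (h i.castSucc : ℤ)).natAbs ≤ 1) ∧
  (∀ i : ℕ, ∀ hi : i + 2 ≤ n,
    ¬(h ⟨i+2, by omega⟩ = h ⟨i, by omega⟩ ∧ h ⟨i+1, by omega⟩ ≠ h ⟨i, by omega⟩))

/-- The number of monotone paths of length `n` in a strip of height `m`. -/
noncomputable def pathCount (m n : ℕ) : ℕ :=
  Nat.card {h : Fin (n+1) → Fin (m+1) // IsMonotonePath m n h}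

namespace GenFunAux

def cond2 (a b c : Fin 3) : Prop := ((a:ℤ) - (b:ℤ)).natAbs ≤ 1 ∧ (a ≠ c ∨ b = c)

instance (a b c : Fin 3) : Decidable (cond2 a b c) := by unfold cond2; infer_instance

def step (w : Fin 3 × Fin 3 → ℕ) : Fin 3 × Fin 3 → ℕ :=
  fun p => ∑ c : Fin 3, if cond2 p.1 p.2 c then w (p.2, c) else 0

def vvec : ℕ → (Fin 3 × Fin 3 → ℕ)
  | 0 => fun p => if p = (0, 0) then 1 else 0
  | n+1 => step (vvec n)

def total (w : Fin 3 × Fin 3 → ℕ) : ℕ := ∑ p : Fin 3 × Fin 3, w p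

lemma imp_iff (n : ℕ) (h : Fin (n+1) → Fin 3) :
    IsMonotonePath 2 n h ↔
      ((h ⟨0, Nat.succ_pos n⟩ : ℕ) = 0 ∧
       (∀ i : ℕ, ∀ hi : i < n,
          ((h ⟨i+1, Nat.succ_lt_succ hi⟩ : ℤ) - (h ⟨i, Nat.lt_succ_of_lt hi⟩ : ℤ)).natAbs ≤ 1) ∧
       (∀ i : ℕ, ∀ hi : i + 2 ≤ n,
          ¬(h ⟨i+2, Nat.lt_succ_of_le hi⟩ = h ⟨i, by omega⟩ ∧
            h ⟨i+1, by omega⟩ ≠ h ⟨i, by omega⟩))) := by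
  unfold IsMonotonePath
  constructor
  · rintro ⟨h1, h2, h3⟩
    exact ⟨h1, fun i hi => h2 ⟨i, hi⟩, h3⟩
  · rintro ⟨h1, h2, h3⟩
    exact ⟨h1, fun i => h2 i.val i.isLt, h3⟩

lemma card_fiber {α : Type*} [Finite α] {ι : Type*} [Fintype ι] (f : α → ι) :
    Nat.card α = ∑ i : ι, Nat.card {x : α // f x = i} := by
  classical
  cases nonempty_fintype α
  simp only [Nat.card_eq_fintype_card]
  calc Fintype.card α = Fintype.card (Σ i : ι, {x : α // f x = i}) :=
        Fintype.card_congr (Equiv.sigmaFiberEquiv f).symm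
    _ = ∑ i : ι, Fintype.card {x : α // f x = i} := Fintype.card_sigma

noncomputable def cnt (n : ℕ) (p : Fin 3 × Fin 3) : ℕ :=
  Nat.card {h : Fin (n+1) → Fin 3 //
    IsMonotonePath 2 n h ∧ h (Fin.last n) = p.1 ∧
      h ⟨n-1, Nat.lt_succ_of_le (Nat.sub_le n 1)⟩ = p.2}

def ext (n : ℕ) (a : Fin 3) (g : Fin (n+1) → Fin 3) : Fin (n+2) → Fin 3 :=
  fun i => if hi : i.val ≤ n then g ⟨i.val, Nat.lt_succ_of_le hi⟩ else a

set_option maxHeartbeats 800000 in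
noncomputable def equivPos (n : ℕ) (a b c : Fin 3) (hc : cond2 a b c) :
    {x : {h : Fin (n+2) → Fin 3 //
        IsMonotonePath 2 (n+1) h ∧ h (Fin.last (n+1)) = a ∧
          h ⟨(n+1)-1, Nat.lt_succ_of_le (Nat.sub_le (n+1) 1)⟩ = b} //
        x.1 ⟨n-1, Nat.lt_succ_of_lt (Nat.lt_succ_of_le (Nat.sub_le n 1))⟩ = c} ≃
    {g : Fin (n+1) → Fin 3 //
        IsMonotonePath 2 n g ∧ g (Fin.last n) = b ∧
          g ⟨n-1, Nat.lt_succ_of_le (Nat.sub_le n 1)⟩ = c} where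
  toFun x := ⟨fun i => x.1.1 ⟨i.val, Nat.lt_succ_of_lt i.isLt⟩, by
      obtain ⟨⟨h, hI, hla, hb⟩, hcv⟩ := x
      rw [imp_iff] at hI
      rw [imp_iff]
      exact ⟨hI.1, fun i hi => hI.2.1 i (Nat.lt_succ_of_lt hi),
        fun i hi => hI.2.2 i (Nat.le_succ_of_le hi)⟩,
    x.1.2.2.2, x.2⟩
  invFun y := ⟨⟨ext n a y.1, by
      obtain ⟨g, hI, hgl, hgc⟩ := y
      have hval : ∀ (j : ℕ) (hj : j < n+1) (hj2 : j < n+2),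
          ext n a g ⟨j, hj2⟩ = g ⟨j, hj⟩ := fun j hj hj2 => dif_pos (Nat.lt_succ_iff.mp hj)
      have hlastv : ∀ (hj2 : n+1 < n+2), ext n a g ⟨n+1, hj2⟩ = a :=
        fun hj2 => dif_neg (Nat.not_succ_le_self n)
      refine ⟨?_, ?_, ?_⟩
      · rw [imp_iff] at hI
        rw [imp_iff]
        refine ⟨?_, ?_, ?_⟩
        · rw [hval 0 (by omega) (by omega)]; exact hI.1
        · intro i hi
          rcases Nat.lt_or_ge i n with hin | hin
          · rw [hval (i+1) (by omega) (by omega), hval i (by omega) (by omega)]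
            exact hI.2.1 i hin
          · have hn : i = n := by omega
            subst hn
            rw [hlastv (by omega), hval i (by omega) (by omega)]
            rw [show g ⟨i, by omega⟩ = g (Fin.last i) from rfl, hgl]
            exact hc.1
        · intro i hi
          rcases Nat.lt_or_ge (i+2) (n+1) with hin | hin
          · rw [hval (i+2) (by omega) (by omega), hval (i+1) (by omega) (by omega),
              hval i (by omega) (by omega)]
            exact hI.2.2 i (by omega)
          · have hn : n = i + 1 := by omega
            subst hn
            rw [show (⟨i+2, by omega⟩ : Fin (i+1+2)) = ⟨i+1+1, by omega⟩ from rfl]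
            rw [hlastv (by omega), hval (i+1) (by omega) (by omega), hval i (by omega) (by omega)]
            rw [show g ⟨i+1, by omega⟩ = g (Fin.last (i+1)) from rfl, hgl]
            rw [show g ⟨i, by omega⟩ = g ⟨i+1-1, by omega⟩ from rfl, hgc]
            rcases hc.2 with h' | h'
            · exact fun hcon => h' hcon.1
            · exact fun hcon => hcon.2 h'
      · exact dif_neg (Nat.not_succ_le_self n)
      · rw [show ext n a g ⟨(n+1)-1, Nat.lt_succ_of_le (Nat.sub_le (n+1) 1)⟩
              = g ⟨n, Nat.lt_succ_self n⟩ from dif_pos (Nat.le_refl n)]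
        exact hgl⟩, by
      show ext n a y.1 ⟨n-1, _⟩ = c
      rw [show ext n a y.1 ⟨n-1, Nat.lt_succ_of_lt (Nat.lt_succ_of_le (Nat.sub_le n 1))⟩
            = y.1 ⟨n-1, Nat.lt_succ_of_le (Nat.sub_le n 1)⟩ from dif_pos (Nat.sub_le n 1)]
      exact y.2.2.2⟩
  left_inv x := by
    apply Subtype.ext; apply Subtype.ext
    funext i
    show (ext n a fun j => x.1.1 ⟨j.val, Nat.lt_succ_of_lt j.isLt⟩) i = x.1.1 i
    rcases Nat.lt_or_ge i.val (n+1) with hi | hi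
    · exact dif_pos (Nat.lt_succ_iff.mp hi)
    · have e : (ext n a fun j => x.1.1 ⟨j.val, Nat.lt_succ_of_lt j.isLt⟩) i = a :=
        dif_neg (Nat.not_le.mpr (Nat.lt_of_succ_le hi))
      rw [e]
      have hi2 : i = Fin.last (n+1) :=
        Fin.ext (Nat.le_antisymm (Nat.lt_succ_iff.mp i.isLt) hi)
      rw [hi2, x.1.2.2.1]
  right_inv y := by
    apply Subtype.ext
    funext i
    show ext n a y.1 ⟨i.val, Nat.lt_succ_of_lt i.isLt⟩ = y.1 i
    exact dif_pos (Nat.lt_succ_iff.mp i.isLt)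

lemma cnt_zero (p : Fin 3 × Fin 3) : cnt 0 p = vvec 0 p := by
  unfold cnt vvec
  by_cases hp : p = ((0 : Fin 3), (0 : Fin 3))
  · subst hp
    rw [if_pos rfl, Nat.card_eq_one_iff_unique]
    constructor
    · constructor
      intro x y
      apply Subtype.ext
      funext i
      rw [show i = Fin.last 0 from Fin.ext (Nat.lt_one_iff.mp i.isLt), x.2.2.1, y.2.2.1]
    · exact ⟨⟨fun _ => 0, ⟨rfl, fun i => i.elim0, fun i hi => by omega⟩, rfl, rfl⟩⟩
  · rw [if_neg hp, Nat.card_eq_zero]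
    left
    constructor
    rintro ⟨h, hI, h1, h2⟩
    apply hp
    have h0 : ∀ j : Fin 1, h j = 0 := fun j => by
      rw [show j = (0 : Fin 1) from Fin.ext (Nat.lt_one_iff.mp j.isLt)]; exact Fin.ext hI.1
    refine Prod.ext ?_ ?_
    · rw [← h1, h0]
    · rw [← h2, h0]

set_option maxHeartbeats 800000 in
lemma cnt_succ (n : ℕ) (a b : Fin 3) :
    cnt (n+1) (a, b) = ∑ c : Fin 3, if cond2 a b c then cnt n (b, c) else 0 := by
  unfold cnt
  rw [card_fiber (fun x : {h : Fin (n+2) → Fin 3 //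
      IsMonotonePath 2 (n+1) h ∧ h (Fin.last (n+1)) = (a, b).1 ∧
        h ⟨(n+1)-1, Nat.lt_succ_of_le (Nat.sub_le (n+1) 1)⟩ = (a, b).2} =>
      x.1 ⟨n-1, Nat.lt_succ_of_lt (Nat.lt_succ_of_le (Nat.sub_le n 1))⟩)]
  refine Finset.sum_congr rfl fun c _ => ?_
  by_cases hc : cond2 a b c
  · rw [if_pos hc]
    exact Nat.card_congr (equivPos n a b c hc)
  · rw [if_neg hc, Nat.card_eq_zero]
    left
    constructor
    rintro ⟨⟨h, hI, hla, hb⟩, hcv⟩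
    apply hc
    rw [imp_iff] at hI
    have hla' : h (Fin.last (n+1)) = a := hla
    have hb' : h ⟨(n+1)-1, Nat.lt_succ_of_le (Nat.sub_le (n+1) 1)⟩ = b := hb
    have hcv' : h ⟨n-1, Nat.lt_succ_of_lt (Nat.lt_succ_of_le (Nat.sub_le n 1))⟩ = c := hcv
    clear hla hb hcv
    subst hla' hb' hcv'
    constructor
    · exact hI.2.1 n (Nat.lt_succ_self n)
    · rcases n with _ | m
      · right; rfl
      · have hx := hI.2.2 m (Nat.le_refl (m+2))
        by_cases hac : h (Fin.last (m+1+1)) = h ⟨m+1-1, Nat.lt_succ_of_lt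
            (Nat.lt_succ_of_le (Nat.sub_le (m+1) 1))⟩
        · right
          by_contra hbc
          exact hx ⟨hac, fun hb' => hbc hb'⟩
        · left; exact hac

lemma cnt_eq_vvec (n : ℕ) : ∀ p, cnt n p = vvec n p := by
  induction n with
  | zero => exact cnt_zero
  | succ n ih =>
    rintro ⟨a, b⟩
    rw [cnt_succ]
    show _ = step (vvec n) (a, b)
    unfold step
    exact Finset.sum_congr rfl fun c _ => by simp only [ih]

lemma pathCount_eq (n : ℕ) : pathCount 2 n = total (vvec n) := by
  unfold pathCount
  rw [card_fiber (fun x : {h : Fin (n+1) → Fin 3 // IsMonotonePath 2 n h} =>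
    (x.1 (Fin.last n), x.1 ⟨n-1, Nat.lt_succ_of_le (Nat.sub_le n 1)⟩))]
  unfold total
  refine Finset.sum_congr rfl fun p _ => ?_
  rw [← cnt_eq_vvec n p]
  unfold cnt
  refine Nat.card_congr
    { toFun := fun x => ⟨x.1.1, x.1.2, (Prod.ext_iff.mp x.2).1, (Prod.ext_iff.mp x.2).2⟩
      invFun := fun y => ⟨⟨y.1, y.2.1⟩, Prod.ext y.2.2.1 y.2.2.2⟩
      left_inv := fun _ => rfl
      right_inv := fun _ => rfl }


lemma total_eval (w : Fin 3 × Fin 3 → ℕ) :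
    total w = w (0,0) + w (0,1) + w (0,2) + w (1,0) + w (1,1) + w (1,2)
      + w (2,0) + w (2,1) + w (2,2) := by
  simp [total, Fintype.sum_prod_type, Fin.sum_univ_succ]
  ring

lemma step_eval (w : Fin 3 × Fin 3 → ℕ) (a b : Fin 3) :
    step w (a, b) = (if cond2 a b 0 then w (b, 0) else 0)
      + ((if cond2 a b 1 then w (b, 1) else 0) + ((if cond2 a b 2 then w (b, 2) else 0))) := by
  simp [step, Fin.sum_univ_succ]

lemma step_rec (w : Fin 3 × Fin 3 → ℕ) :
    total (step (step (step (step w)))) + total (step (step w)) =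
      2 * total (step (step (step w))) + total (step w) + total w := by
  simp only [total_eval, step_eval]
  norm_num [cond2, Fin.ext_iff]
  ring

lemma path_rec (m : ℕ) :
    pathCount 2 (m+4) + pathCount 2 (m+2) =
      2 * pathCount 2 (m+3) + pathCount 2 (m+1) + pathCount 2 m := by
  rw [pathCount_eq, pathCount_eq, pathCount_eq, pathCount_eq, pathCount_eq]
  rw [show vvec (m+4) = step (step (step (step (vvec m)))) from rfl,
    show vvec (m+3) = step (step (step (vvec m))) from rfl,
    show vvec (m+2) = step (step (vvec m)) from rfl,
    show vvec (m+1) = step (vvec m) from rfl]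
  exact step_rec (vvec m)

lemma path_vals : pathCount 2 0 = 1 ∧ pathCount 2 1 = 2 ∧ pathCount 2 2 = 4 ∧
    pathCount 2 3 = 8 ∧ pathCount 2 4 = 15 ∧ pathCount 2 5 = 28 ∧ pathCount 2 6 = 53 ∧
    pathCount 2 7 = 101 := by
  rw [pathCount_eq, pathCount_eq, pathCount_eq, pathCount_eq, pathCount_eq, pathCount_eq,
    pathCount_eq, pathCount_eq]
  decide

end GenFunAux

open PowerSeries in
theorem genfun_height_two :
    (1 - 2*(X : PowerSeries ℤ) + X^2 - X^3 - X^4) *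
        PowerSeries.mk (fun n => (pathCount 2 n : ℤ)) = 1 + X^2 + X^3 ∧
    pathCount 2 0 = 1 ∧ pathCount 2 1 = 2 ∧ pathCount 2 2 = 4 ∧ pathCount 2 3 = 8 ∧
    pathCount 2 4 = 15 ∧ pathCount 2 5 = 28 ∧ pathCount 2 6 = 53 ∧ pathCount 2 7 = 101 := by
  obtain ⟨v0, v1, v2, v3, v4, v5, v6, v7⟩ := GenFunAux.path_vals
  refine ⟨?_, v0, v1, v2, v3, v4, v5, v6, v7⟩
  set f : PowerSeries ℤ := PowerSeries.mk (fun n => (pathCount 2 n : ℤ)) with hf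
  have expand : (1 - 2*(X : PowerSeries ℤ) + X^2 - X^3 - X^4) * f
      = f - (f * X^1 + f * X^1) + f * X^2 - f * X^3 - f * X^4 := by ring
  rw [expand]
  ext n
  simp only [map_sub, map_add, PowerSeries.coeff_mul_X_pow', PowerSeries.coeff_mk,
    PowerSeries.coeff_one, PowerSeries.coeff_X_pow, hf]
  match n with
  | 0 => norm_num [v0]
  | 1 => norm_num [v0, v1]
  | 2 => norm_num [v0, v1, v2]
  | 3 => norm_num [v0, v1, v2, v3]
  | (m+4) =>
    have hr := GenFunAux.path_rec m
    have h1 : (1:ℕ) ≤ m+4 := by omega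
    have h2 : (2:ℕ) ≤ m+4 := by omega
    have h3 : (3:ℕ) ≤ m+4 := by omega
    have h4 : (4:ℕ) ≤ m+4 := by omega
    rw [if_pos h1, if_pos h2, if_pos h3, if_pos h4,
      if_neg (by omega : ¬(m+4 = 0)), if_neg (by omega : ¬(m+4 = 2)),
      if_neg (by omega : ¬(m+4 = 3))]
    have e1 : m+4-1 = m+3 := by omega
    have e2 : m+4-2 = m+2 := by omega
    have e3 : m+4-3 = m+1 := by omega
    have e4 : m+4-4 = m := by omega
    rw [e1, e2, e3, e4]
    push_cast
    have := congrArg (fun k : ℕ => (k : ℤ)) hr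
    push_cast at this
    linarith
end

section
/- Suppose f : ℕ → ℂ satisfies ∑ₙ f(n)xⁿ = P(x)/Q(x) with Q(x) = ∏ᵢ₌₁ᵏ (1-λᵢx)^{dᵢ}, the λᵢ distinct and nonzero, deg P < deg Q. If λ = λ₁ is a positive real with d₁ = 1 and |λᵢ| < λ for i ≥ 2, then f(n)/λⁿ converges to a = -λ·P(1/λ)/Q'(1/λ) as n → ∞. -/
/-!
Write `Q = (1 - λX) Q₁` and `a = P(1/λ) / Q₁(1/λ)`. Then `P - a Q₁` vanishes at `1/λ`, so it is
`(1 - λX) T` for a polynomial `T`, and `f(n) - a λⁿ` has generating function `T / Q₁`.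
Dividing a series by a factor `1 - μX` convolves its coefficients with `μⁿ`; for `‖μ‖ ≤ ρ` this
costs at most one factor `n + 1` in a bound `(n + 1)ᴰ ρⁿ`. Choosing `ρ < λ` above all other
`‖λᵢ‖` gives `(f(n) - a λⁿ) / λⁿ → 0`, and `Q'(1/λ) = -λ Q₁(1/λ)` identifies `a` with the limit.
-/

open scoped Polynomial
open Filter Asymptotics Finset

namespace Polynomial

variable {K : Type*} [Field K]

theorem eval_inv_prod_one_sub_C_mul_X_pow_ne_zero {ι : Type*} {s : Finset ι} {lam : ι → K}
    (d : ι → ℕ) {z : K} (hs : ∀ i ∈ s, lam i ≠ z) :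
    (∏ i ∈ s, (1 - C (lam i) * X) ^ d i).eval z⁻¹ ≠ 0 := by
  simp only [eval_prod, eval_pow, eval_sub, eval_one, eval_mul, eval_C, eval_X]
  refine prod_ne_zero_iff.2 fun i hi => pow_ne_zero _ (sub_ne_zero.2 fun h => hs i hi ?_)
  rcases eq_or_ne z 0 with rfl | hz
  · simp at h
  · exact (mul_inv_eq_one₀ hz).1 h.symm

theorem eval_inv_derivative_one_sub_C_mul_X_mul {μ : K} (hμ : μ ≠ 0) (F : K[X]) :
    (derivative ((1 - C μ * X) * F)).eval μ⁻¹ = -μ * F.eval μ⁻¹ := by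
  simp [derivative_mul, hμ]

theorem one_sub_C_mul_X_dvd_iff {μ : K} (hμ : μ ≠ 0) {p : K[X]} :
    1 - C μ * X ∣ p ↔ p.eval μ⁻¹ = 0 := by
  have : 1 - C μ * X = C (-μ) * (X - C μ⁻¹) := by
    rw [mul_sub, ← C_mul, neg_mul, mul_inv_cancel₀ hμ]; simp; ring
  rw [this, (isUnit_C.2 (neg_ne_zero.2 hμ).isUnit).mul_left_dvd, dvd_iff_isRoot, IsRoot.def]

end Polynomial

namespace PowerSeries

section CommRing

variable {R : Type*} [CommRing R]

theorem mk_pow_mul_one_sub_C_mul_X (μ : R) : mk (μ ^ ·) * (1 - C μ * X) = 1 := by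
  simpa [rescale_mk, rescale_X] using congrArg (rescale μ) (mk_one_mul_one_sub_eq_one (S := R))

theorem coeff_eq_sum_of_mul_one_sub_C_mul_X_eq {φ ψ : R⟦X⟧} {μ : R}
    (h : φ * (1 - C μ * X) = ψ) (n : ℕ) :
    coeff n φ = ∑ p ∈ antidiagonal n, coeff p.1 ψ * μ ^ p.2 := by
  have : φ = ψ * mk (μ ^ ·) := by
    rw [← h, mul_assoc, mul_comm (1 - _), mk_pow_mul_one_sub_C_mul_X, mul_one]
  simp [this, coeff_mul]

end CommRing

section Field

variable {K : Type*} [Field K]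

theorem exists_mk_sub_geometric_mul_eq {f : ℕ → K} {P F : K[X]} {μ : K} (hμ : μ ≠ 0)
    (hF : F.eval μ⁻¹ ≠ 0)
    (h : mk f * (((1 - Polynomial.C μ * Polynomial.X) * F : K[X]) : K⟦X⟧) = P) :
    ∃ T : K[X], mk (fun n => f n - P.eval μ⁻¹ / F.eval μ⁻¹ * μ ^ n) * (F : K⟦X⟧) = T := by
  set a := P.eval μ⁻¹ / F.eval μ⁻¹
  obtain ⟨T, hT⟩ := (Polynomial.one_sub_C_mul_X_dvd_iff hμ).2
    (show (P - Polynomial.C a * F).eval μ⁻¹ = 0 by simp [a, hF])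
  have hcoe : ((1 - Polynomial.C μ * Polynomial.X : K[X]) : K⟦X⟧) = 1 - C μ * X := by simp
  have hne : (1 - C μ * X : K⟦X⟧) ≠ 0 := fun h0 => by simpa using congrArg constantCoeff h0
  have hmk : mk (fun n => f n - a * μ ^ n) = mk f - C a * mk (μ ^ ·) := by ext; simp
  rw [Polynomial.coe_mul, hcoe] at h
  refine ⟨T, mul_left_cancel₀ hne ?_⟩
  calc (1 - C μ * X) * (mk (fun n => f n - a * μ ^ n) * (F : K⟦X⟧))
      = mk f * ((1 - C μ * X) * (F : K⟦X⟧)) - C a * (mk (μ ^ ·) * (1 - C μ * X)) * (F : K⟦X⟧) := by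
        rw [hmk]; ring
    _ = ((P - Polynomial.C a * F : K[X]) : K⟦X⟧) := by
        rw [h, mk_pow_mul_one_sub_C_mul_X, mul_one]; simp
    _ = (1 - C μ * X) * (T : K⟦X⟧) := by rw [hT, Polynomial.coe_mul, hcoe]

end Field

section Normed

variable {𝕜 : Type*} [NormedField 𝕜] {ρ : ℝ}

theorem isBigO_coeff_coe (T : 𝕜[X]) (g : ℕ → ℝ) :
    (fun n => coeff n (T : 𝕜⟦X⟧)) =O[atTop] g := by
  refine (isBigO_zero g atTop).congr' ?_ EventuallyEq.rfl
  filter_upwards [eventually_gt_atTop T.natDegree] with n hn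
  simp [Polynomial.coeff_eq_zero_of_natDegree_lt hn]

theorem isBigO_coeff_of_isBigO_coeff_mul_one_sub_C_mul_X {φ : 𝕜⟦X⟧} {μ : 𝕜} {D : ℕ}
    (hρ : 0 < ρ) (hμ : ‖μ‖ ≤ ρ)
    (h : (fun n => coeff n (φ * (1 - C μ * X))) =O[atTop] fun n => ((n : ℝ) + 1) ^ D * ρ ^ n) :
    (fun n => coeff n φ) =O[atTop] fun n => ((n : ℝ) + 1) ^ (D + 1) * ρ ^ n := by
  obtain ⟨c, hc0, hc⟩ := bound_of_isBigO_nat_atTop h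
  refine (isBigO_nat_atTop_iff fun n h => absurd h (by positivity)).2 ⟨c, fun n => ?_⟩
  have hρn : ∀ n : ℕ, ‖((n : ℝ) + 1) ^ D * ρ ^ n‖ = ((n : ℝ) + 1) ^ D * ρ ^ n := fun n =>
    Real.norm_of_nonneg (by positivity)
  have hterm : ∀ p ∈ antidiagonal n,
      ‖coeff p.1 (φ * (1 - C μ * X)) * μ ^ p.2‖ ≤ c * (((n : ℝ) + 1) ^ D * ρ ^ n) := by
    intro p hp
    rw [HasAntidiagonal.mem_antidiagonal] at hp
    have hp1 : (p.1 : ℝ) + 1 ≤ n + 1 := by exact_mod_cast (show p.1 + 1 ≤ n + 1 by omega)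
    calc ‖coeff p.1 (φ * (1 - C μ * X)) * μ ^ p.2‖
        ≤ c * (((p.1 : ℝ) + 1) ^ D * ρ ^ p.1) * ρ ^ p.2 := by
          rw [norm_mul, norm_pow, ← hρn]
          exact mul_le_mul (hc (by positivity)) (pow_le_pow_left₀ (norm_nonneg _) hμ _)
            (by positivity) (by positivity)
      _ = c * (((p.1 : ℝ) + 1) ^ D * ρ ^ n) := by rw [← hp, pow_add]; ring
      _ ≤ c * (((n : ℝ) + 1) ^ D * ρ ^ n) := by gcongr
  calc ‖coeff n φ‖ ≤ ∑ p ∈ antidiagonal n, c * (((n : ℝ) + 1) ^ D * ρ ^ n) := by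
        rw [coeff_eq_sum_of_mul_one_sub_C_mul_X_eq rfl n]
        exact norm_sum_le_of_le _ hterm
    _ = c * ‖((n : ℝ) + 1) ^ (D + 1) * ρ ^ n‖ := by
        rw [sum_const, Nat.card_antidiagonal, nsmul_eq_mul, Real.norm_of_nonneg (by positivity)]
        push_cast
        ring

theorem isBigO_coeff_of_isBigO_coeff_mul_one_sub_C_mul_X_pow {μ : 𝕜} (hρ : 0 < ρ)
    (hμ : ‖μ‖ ≤ ρ) (m : ℕ) {φ : 𝕜⟦X⟧} {D : ℕ}
    (h : (fun n => coeff n (φ * (1 - C μ * X) ^ m)) =O[atTop] fun n => ((n : ℝ) + 1) ^ D * ρ ^ n) :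
    (fun n => coeff n φ) =O[atTop] fun n => ((n : ℝ) + 1) ^ (D + m) * ρ ^ n := by
  induction m generalizing φ with
  | zero => simpa using h
  | succ m ih =>
    rw [pow_succ', ← mul_assoc] at h
    exact isBigO_coeff_of_isBigO_coeff_mul_one_sub_C_mul_X hρ hμ (ih h)

theorem isBigO_coeff_of_isBigO_coeff_mul_prod {ι : Type*} {s : Finset ι} {lam : ι → 𝕜}
    (d : ι → ℕ) (hρ : 0 < ρ) (hs : ∀ i ∈ s, ‖lam i‖ ≤ ρ) {φ : 𝕜⟦X⟧} {D : ℕ}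
    (h : (fun n => coeff n (φ * ∏ i ∈ s, (1 - C (lam i) * X) ^ d i)) =O[atTop]
      fun n => ((n : ℝ) + 1) ^ D * ρ ^ n) :
    (fun n => coeff n φ) =O[atTop] fun n => ((n : ℝ) + 1) ^ (D + ∑ i ∈ s, d i) * ρ ^ n := by
  classical
  induction s using Finset.induction_on generalizing φ with
  | empty => simpa using h
  | insert i s hi ih =>
    rw [prod_insert hi, ← mul_assoc] at h
    rw [sum_insert hi, add_comm (d i), ← add_assoc]
    exact isBigO_coeff_of_isBigO_coeff_mul_one_sub_C_mul_X_pow hρ (hs i (mem_insert_self i s)) _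
      (ih (fun j hj => hs j (mem_insert_of_mem hj)) h)

end Normed

end PowerSeries

theorem tendsto_div_pow_nhds_zero_of_isBigO {𝕜 : Type*} [NormedField 𝕜] {u : ℕ → 𝕜} {z : 𝕜}
    {ρ : ℝ} {D : ℕ} (hρ : 0 < ρ) (hρz : ρ < ‖z‖)
    (h : u =O[atTop] fun n => ((n : ℝ) + 1) ^ D * ρ ^ n) :
    Tendsto (fun n => u n / z ^ n) atTop (nhds 0) := by
  have hz : 0 < ‖z‖ := hρ.trans hρz
  have hx : 0 < ρ / ‖z‖ := div_pos hρ hz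
  have hinv : (fun n => (z ^ n)⁻¹) =O[atTop] fun n => ‖z‖⁻¹ ^ n :=
    isBigO_of_le _ fun n => by simp
  have hdiv : (fun n => u n / z ^ n) =O[atTop] fun n => ((n : ℝ) + 1) ^ D * (ρ / ‖z‖) ^ n :=
    (h.mul hinv).congr (fun n => (div_eq_mul_inv _ _).symm) fun n => by
      rw [mul_assoc, ← mul_pow, div_eq_mul_inv]
  refine hdiv.trans_tendsto ?_
  have hshift := (tendsto_add_atTop_iff_nat 1).2 (tendsto_pow_const_mul_const_pow_of_abs_lt_one D
    (abs_lt.2 ⟨by linarith, (div_lt_one hz).2 hρz⟩))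
  have := hshift.mul_const (ρ / ‖z‖)⁻¹
  rw [zero_mul] at this
  refine this.congr fun n => ?_
  push_cast
  rw [pow_succ]
  field_simp

open Polynomial

theorem dominant_simple_pole_asymptotics_general (f : ℕ → ℂ) (P Q : Polynomial ℂ)
    (k : ℕ) (hk : 1 ≤ k) (lam : Fin k → ℂ) (d : Fin k → ℕ)
    (hQ : Q = ∏ i : Fin k, (1 - Polynomial.C (lam i) * Polynomial.X) ^ (d i))
    (hgen : PowerSeries.mk f * (Q : PowerSeries ℂ) = (P : PowerSeries ℂ))
    (r : ℝ) (hr : 0 < r) (hlam0 : lam ⟨0, hk⟩ = (r : ℂ))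
    (hd0 : d ⟨0, hk⟩ = 1)
    (hdom : ∀ i : Fin k, i ≠ ⟨0, hk⟩ → ‖lam i‖ < r) :
    Tendsto (fun n => f n / (lam ⟨0, hk⟩)^n) atTop
      (nhds (-(lam ⟨0, hk⟩) * P.eval (lam ⟨0, hk⟩)⁻¹ /
        (Polynomial.derivative Q).eval (lam ⟨0, hk⟩)⁻¹)) := by
  set i₀ : Fin k := ⟨0, hk⟩
  set Q₁ := ∏ i ∈ univ.erase i₀, (1 - C (lam i) * X) ^ d i
  have hlam : lam i₀ ≠ 0 := by rw [hlam0]; exact_mod_cast hr.ne'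
  have hnorm : ‖lam i₀‖ = r := by simp [hlam0, hr.le]
  have hQfac : Q = (1 - C (lam i₀) * X) * Q₁ := by
    rw [hQ, ← mul_prod_erase _ _ (mem_univ i₀), hd0, pow_one]
  have hQ₁ : Q₁.eval (lam i₀)⁻¹ ≠ 0 := eval_inv_prod_one_sub_C_mul_X_pow_ne_zero d
    fun i hi h => (hdom i (ne_of_mem_erase hi)).ne (h ▸ hnorm)
  obtain ⟨T, hT⟩ := PowerSeries.exists_mk_sub_geometric_mul_eq hlam hQ₁ (hQfac ▸ hgen)
  obtain ⟨ρ, ⟨hρ, hρr⟩, hρbd⟩ := (Eventually.and (Ioo_mem_nhdsLT hr)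
    ((eventually_all_finset (univ.erase i₀)).2 fun i hi =>
      Eventually.mono (Ioo_mem_nhdsLT (hdom i (ne_of_mem_erase hi))) fun _ h => h.1.le)).exists
  have hQ₁coe : (Q₁ : PowerSeries ℂ) =
      ∏ i ∈ univ.erase i₀, (1 - PowerSeries.C (lam i) * PowerSeries.X) ^ d i := by
    rw [← coeToPowerSeries.ringHom_apply, map_prod]; simp
  have hbig := PowerSeries.isBigO_coeff_of_isBigO_coeff_mul_prod (D := 0) d hρ hρbd
    (by rw [← hQ₁coe, hT]; exact PowerSeries.isBigO_coeff_coe T _)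
  have hlim := (tendsto_div_pow_nhds_zero_of_isBigO hρ (hnorm ▸ hρr) hbig).add_const
    (P.eval (lam i₀)⁻¹ / Q₁.eval (lam i₀)⁻¹)
  rw [zero_add] at hlim
  rw [hQfac, eval_inv_derivative_one_sub_C_mul_X_mul hlam,
    mul_div_mul_left _ _ (neg_ne_zero.2 hlam)]
  refine hlim.congr fun n => ?_
  simp only [PowerSeries.coeff_mk]
  field_simp
  ring

theorem dominant_simple_pole_asymptotics (f : ℕ → ℂ) (P Q : Polynomial ℂ)
    (k : ℕ) (hk : 1 ≤ k) (lam : Fin k → ℂ) (d : Fin k → ℕ)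
    (hinj : Function.Injective lam) (hne : ∀ i, lam i ≠ 0)
    (hQ : Q = ∏ i : Fin k, (1 - Polynomial.C (lam i) * Polynomial.X) ^ (d i))
    (hdeg : P.degree < Q.degree)
    (hgen : PowerSeries.mk f * (Q : PowerSeries ℂ) = (P : PowerSeries ℂ))
    (r : ℝ) (hr : 0 < r) (hlam0 : lam ⟨0, hk⟩ = (r : ℂ))
    (hd0 : d ⟨0, hk⟩ = 1)
    (hdom : ∀ i : Fin k, i ≠ ⟨0, hk⟩ → ‖lam i‖ < r) :
    Tendsto (fun n => f n / (lam ⟨0, hk⟩)^n) atTop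
      (nhds (-(lam ⟨0, hk⟩) * P.eval (lam ⟨0, hk⟩)⁻¹ /
        (Polynomial.derivative Q).eval (lam ⟨0, hk⟩)⁻¹)) :=
  dominant_simple_pole_asymptotics_general f P Q k hk lam d hQ hgen r hr hlam0 hd0 hdom
end

section
/- Let P be the transition matrix of an irreducible, reversible Markov chain on a finite state space with stationary distribution π and conductance Φ = min over S with 0 < π(S) ≤ 1/2 of (∑_{x∈S,y∉S} π(x)P(x,y))/π(S). Then the second largest eigenvalue λ₁ of P satisfies λ₁ ≥ 1 - 2Φ. -/
/-!
Symmetrize `P` to `A = D^{1/2} P D^{-1/2}` with `D = diag π`, which is symmetric by reversibility.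
For a set `S` realizing `Φ`, with `p = π(S)`, the test vector `f = √π · (1_S - p)` has
`‖f‖² = p(1 - p)` and, by the Dirichlet form identity, `⟪f, A f⟫ = p(1 - p) - Φ p`, so its
Rayleigh quotient is at least `1 - 2Φ` because `p ≤ 1/2`. Expanding `f` in an eigenbasis of `A`,
some eigenvector with a nonzero coefficient has eigenvalue at least this quotient. That eigenvalue
is `≤ 1` (Gershgorin, `P` being stochastic) and `≠ 1`: by irreducibility and the maximum
principle the eigenvectors for `1` are multiples of `√π`, to which `f` is orthogonal.
-/

open Matrix

namespace Matrix

variable {m : Type*} [Fintype m] [DecidableEq m]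

lemma hasEigenvalue_toLin'_of_mulVec_eq_smul {K : Type*} [Field K] {P : Matrix m m K} {μ : K}
    {v : m → K} (hv : v ≠ 0) (hPv : P *ᵥ v = μ • v) : Module.End.HasEigenvalue (toLin' P) μ :=
  Module.End.hasEigenvalue_of_hasEigenvector ⟨Module.End.mem_eigenspace_iff.2 hPv, hv⟩

lemma le_one_of_hasEigenvalue_of_mem_rowStochastic {P : Matrix m m ℝ}
    (hP : P ∈ rowStochastic ℝ m) {μ : ℝ} (hμ : Module.End.HasEigenvalue (toLin' P) μ) :
    μ ≤ 1 := by
  obtain ⟨k, hk⟩ := eigenvalue_mem_ball hμ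
  have hrow : P k k + ∑ j ∈ Finset.univ.erase k, P k j = 1 := by
    rw [Finset.add_sum_erase _ _ (Finset.mem_univ k), sum_row_of_mem_rowStochastic hP]
  simp only [Real.norm_of_nonneg (nonneg_of_mem_rowStochastic hP), Metric.mem_closedBall,
    Real.dist_eq] at hk
  linarith [le_abs_self (μ - P k k)]

/-- Maximum principle: at a maximum `x₀` of `h`, the mean `h x₀ = ∑ z, (P ^ k) x₀ z * h z`
forces `h z = h x₀` wherever `(P ^ k) x₀ z > 0`. -/
lemma eq_of_mulVec_eq_self_of_mem_rowStochastic {P : Matrix m m ℝ}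
    (hP : P ∈ rowStochastic ℝ m) (hirr : ∀ x y, ∃ k : ℕ, 0 < (P ^ k) x y) {h : m → ℝ}
    (hh : P *ᵥ h = h) (x y : m) : h x = h y := by
  have hpow : ∀ k : ℕ, (P ^ k) *ᵥ h = h := by
    intro k
    induction k with
    | zero => simp
    | succ k ih => rw [pow_succ, ← mulVec_mulVec, hh, ih]
  obtain ⟨x₀, -, hmax⟩ := Finset.exists_max_image Finset.univ h ⟨x, Finset.mem_univ x⟩
  suffices ∀ y, h y = h x₀ by rw [this x, this y]
  intro y
  obtain ⟨k, hk⟩ := hirr x₀ y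
  have hPk : P ^ k ∈ rowStochastic ℝ m := pow_mem hP k
  have hmean : ∑ z, (P ^ k) x₀ z * h z = ∑ z, (P ^ k) x₀ z * h x₀ := by
    rw [← Finset.sum_mul, sum_row_of_mem_rowStochastic hPk, one_mul]
    exact congrFun (hpow k) x₀
  have hle : ∀ z ∈ Finset.univ, (P ^ k) x₀ z * h z ≤ (P ^ k) x₀ z * h x₀ := fun z _ =>
    mul_le_mul_of_nonneg_left (hmax z (Finset.mem_univ z)) (nonneg_of_mem_rowStochastic hPk)
  exact mul_left_cancel₀ hk.ne' ((Finset.sum_eq_sum_iff_of_le hle).1 hmean y (Finset.mem_univ y))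

lemma IsHermitian.dotProduct_mulVec_eq_sum {A : Matrix m m ℝ} (hA : A.IsHermitian) (f : m → ℝ) :
    f ⬝ᵥ (A *ᵥ f) = ∑ i, hA.eigenvalues i * (⇑(hA.eigenvectorBasis i) ⬝ᵥ f) ^ 2 := by
  set b := hA.eigenvectorBasis
  have hcoord : ∀ i, ⇑(b i) ⬝ᵥ (A *ᵥ f) = hA.eigenvalues i * (⇑(b i) ⬝ᵥ f) := by
    intro i
    rw [dotProduct_mulVec, ← mulVec_transpose, (isHermitian_iff_isSymm.1 hA).eq,
      hA.mulVec_eigenvectorBasis, smul_dotProduct, smul_eq_mul]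
  have := b.sum_inner_mul_inner (WithLp.toLp 2 f) (WithLp.toLp 2 (A *ᵥ f))
  simp only [EuclideanSpace.inner_eq_star_dotProduct, star_trivial, dotProduct_comm (A *ᵥ f),
    hcoord] at this
  rw [← this]
  exact Finset.sum_congr rfl fun i _ => by ring

lemma IsHermitian.dotProduct_self_eq_sum {A : Matrix m m ℝ} (hA : A.IsHermitian) (f : m → ℝ) :
    f ⬝ᵥ f = ∑ i, (⇑(hA.eigenvectorBasis i) ⬝ᵥ f) ^ 2 := by
  have := hA.eigenvectorBasis.sum_inner_mul_inner (WithLp.toLp 2 f) (WithLp.toLp 2 f)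
  simp only [EuclideanSpace.inner_eq_star_dotProduct, star_trivial, dotProduct_comm f] at this
  simpa only [sq] using this.symm

lemma IsHermitian.exists_eigenvalue_ge_rayleigh {A : Matrix m m ℝ} (hA : A.IsHermitian)
    {f : m → ℝ} (hf : f ≠ 0) :
    ∃ i, ⇑(hA.eigenvectorBasis i) ⬝ᵥ f ≠ 0 ∧ f ⬝ᵥ (A *ᵥ f) ≤ hA.eigenvalues i * (f ⬝ᵥ f) := by
  set c := fun i => ⇑(hA.eigenvectorBasis i) ⬝ᵥ f
  obtain ⟨j, hj⟩ : ∃ j, c j ≠ 0 := by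
    by_contra! hc
    simp only [c] at hc
    exact hf (dotProduct_self_eq_zero.1 (by simp [hA.dotProduct_self_eq_sum, hc]))
  have hsupp : (Finset.univ.filter fun i => c i ≠ 0).Nonempty := ⟨j, by simpa using hj⟩
  obtain ⟨i₀, hi₀, hmax⟩ := Finset.exists_max_image _ hA.eigenvalues hsupp
  refine ⟨i₀, (Finset.mem_filter.1 hi₀).2, ?_⟩
  rw [hA.dotProduct_mulVec_eq_sum, hA.dotProduct_self_eq_sum, Finset.mul_sum]
  refine Finset.sum_le_sum fun i _ => ?_
  by_cases hci : c i = 0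
  · simp only [c] at hci
    simp [hci]
  · exact mul_le_mul_of_nonneg_right (hmax i (by simpa using hci)) (sq_nonneg _)

end Matrix

section Reversible

variable {m : Type*} {π : m → ℝ} {P : Matrix m m ℝ}

noncomputable def symmetrized (π : m → ℝ) (P : Matrix m m ℝ) : Matrix m m ℝ :=
  of fun x y => √(π x) * P x y / √(π y)

lemma symmetrized_isHermitian (hπ : ∀ x, 0 < π x) (hrev : ∀ x y, π x * P x y = π y * P y x) :
    (symmetrized π P).IsHermitian := by
  refine isHermitian_iff_isSymm.2 (IsSymm.ext fun x y => ?_)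
  have hx := Real.sqrt_pos.2 (hπ x)
  have hy := Real.sqrt_pos.2 (hπ y)
  simp only [symmetrized, of_apply]
  rw [div_eq_div_iff hx.ne' hy.ne']
  have := hrev y x
  rw [← Real.mul_self_sqrt (hπ x).le, ← Real.mul_self_sqrt (hπ y).le] at this
  linear_combination this

variable [Fintype m]

lemma symmetrized_mulVec (hπ : ∀ x, 0 < π x) (v : m → ℝ) :
    symmetrized π P *ᵥ (fun x => √(π x) * v x) = fun x => √(π x) * (P *ᵥ v) x := by
  ext x
  simp only [mulVec, dotProduct, symmetrized, of_apply, Finset.mul_sum]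
  refine Finset.sum_congr rfl fun y _ => ?_
  field_simp [(Real.sqrt_pos.2 (hπ y)).ne']

lemma mulVec_div_sqrt_eq_smul (hπ : ∀ x, 0 < π x) {μ : ℝ} {u : m → ℝ}
    (hu : symmetrized π P *ᵥ u = μ • u) :
    P *ᵥ (fun x => u x / √(π x)) = μ • fun x => u x / √(π x) := by
  have hu_eq : u = fun x => √(π x) * (u x / √(π x)) := by
    ext x; field_simp [(Real.sqrt_pos.2 (hπ x)).ne']
  rw [hu_eq, symmetrized_mulVec hπ] at hu
  ext x
  have := congrFun hu x
  simp only [Pi.smul_apply, smul_eq_mul] at this ⊢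
  exact mul_left_cancel₀ (Real.sqrt_pos.2 (hπ x)).ne' (this.trans (by ring))

lemma sqrt_mul_dotProduct_sqrt_mul (hπ : ∀ x, 0 ≤ π x) (g h : m → ℝ) :
    (fun x => √(π x) * g x) ⬝ᵥ (fun x => √(π x) * h x) = ∑ x, π x * (g x * h x) := by
  refine Finset.sum_congr rfl fun x _ => ?_
  rw [← Real.mul_self_sqrt (hπ x)]
  ring

variable [DecidableEq m]

lemma hasEigenvalue_toLin'_of_symmetrized_mulVec_eq_smul (hπ : ∀ x, 0 < π x) {μ : ℝ}
    {u : m → ℝ} (hu0 : u ≠ 0) (hu : symmetrized π P *ᵥ u = μ • u) :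
    Module.End.HasEigenvalue (toLin' P) μ := by
  refine hasEigenvalue_toLin'_of_mulVec_eq_smul (fun hv0 => hu0 ?_) (mulVec_div_sqrt_eq_smul hπ hu)
  ext x
  simpa [(Real.sqrt_pos.2 (hπ x)).ne'] using congrFun hv0 x

lemma sum_mul_sub_mulVec_eq_half_sum_sq (hP : P ∈ rowStochastic ℝ m)
    (hrev : ∀ x y, π x * P x y = π y * P y x) (g : m → ℝ) :
    ∑ x, π x * g x * (g x - (P *ᵥ g) x) = (∑ x, ∑ y, π x * P x y * (g x - g y) ^ 2) / 2 := by
  have hrow : ∀ x, ∑ y, π x * P x y = π x := fun x => by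
    rw [← Finset.mul_sum, sum_row_of_mem_rowStochastic hP, mul_one]
  have hstat : ∀ y, ∑ x, π x * P x y = π y := fun y => by simp only [hrev _ y, hrow y]
  have hsq_left : ∑ x, ∑ y, π x * P x y * g x ^ 2 = ∑ x, π x * g x ^ 2 := by
    simp only [← Finset.sum_mul, hrow]
  have hsq_right : ∑ x, ∑ y, π x * P x y * g y ^ 2 = ∑ x, π x * g x ^ 2 := by
    rw [Finset.sum_comm]
    simp only [← Finset.sum_mul, hstat]
  have hcross : ∑ x, ∑ y, π x * P x y * (g x * g y) = ∑ x, π x * g x * (P *ᵥ g) x := by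
    simp only [mulVec, dotProduct, Finset.mul_sum]
    exact Finset.sum_congr rfl fun x _ => Finset.sum_congr rfl fun y _ => by ring
  have hexpand : ∑ x, ∑ y, π x * P x y * (g x - g y) ^ 2 = ∑ x, ∑ y, π x * P x y * g x ^ 2
      - 2 * ∑ x, ∑ y, π x * P x y * (g x * g y) + ∑ x, ∑ y, π x * P x y * g y ^ 2 := by
    simp only [Finset.mul_sum, ← Finset.sum_sub_distrib, ← Finset.sum_add_distrib]
    exact Finset.sum_congr rfl fun x _ => Finset.sum_congr rfl fun y _ => by ring
  have hlhs : ∑ x, π x * g x * (g x - (P *ᵥ g) x)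
      = ∑ x, π x * g x ^ 2 - ∑ x, π x * g x * (P *ᵥ g) x := by
    rw [← Finset.sum_sub_distrib]
    exact Finset.sum_congr rfl fun x _ => by ring
  rw [hlhs, hexpand, hsq_left, hsq_right, hcross]
  ring

lemma sqrt_mul_dotProduct_symmetrized_mulVec (hπ : ∀ x, 0 < π x) (hP : P ∈ rowStochastic ℝ m)
    (hrev : ∀ x y, π x * P x y = π y * P y x) (g : m → ℝ) :
    (fun x => √(π x) * g x) ⬝ᵥ (symmetrized π P *ᵥ fun x => √(π x) * g x)
      = ∑ x, π x * g x ^ 2 - (∑ x, ∑ y, π x * P x y * (g x - g y) ^ 2) / 2 := by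
  rw [symmetrized_mulVec hπ, sqrt_mul_dotProduct_sqrt_mul (fun x => (hπ x).le),
    ← sum_mul_sub_mulVec_eq_half_sum_sq hP hrev, ← Finset.sum_sub_distrib]
  exact Finset.sum_congr rfl fun x _ => by ring

/-- The eigenvectors of `symmetrized π P` for the eigenvalue `1` are the multiples of `√π`. -/
lemma dotProduct_sqrt_mul_eq_zero_of_symmetrized_mulVec_eq_self [Nonempty m]
    (hπ : ∀ x, 0 < π x) (hP : P ∈ rowStochastic ℝ m) (hirr : ∀ x y, ∃ k : ℕ, 0 < (P ^ k) x y)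
    {u : m → ℝ} (hu : symmetrized π P *ᵥ u = u) {g : m → ℝ} (hg : ∑ x, π x * g x = 0) :
    u ⬝ᵥ (fun x => √(π x) * g x) = 0 := by
  set v := fun x => u x / √(π x)
  have hv : P *ᵥ v = v := by
    simpa using mulVec_div_sqrt_eq_smul hπ (μ := 1) (by rwa [one_smul])
  obtain ⟨x₀⟩ := ‹Nonempty m›
  have hu_eq : u = fun x => √(π x) * v x₀ := by
    ext x
    rw [← eq_of_mulVec_eq_self_of_mem_rowStochastic hP hirr hv x x₀]
    exact (mul_div_cancel₀ _ (Real.sqrt_pos.2 (hπ x)).ne').symm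
  rw [hu_eq, sqrt_mul_dotProduct_sqrt_mul (fun x => (hπ x).le)]
  simp only [mul_left_comm (π _), ← Finset.mul_sum, hg, mul_zero]

end Reversible

section CenteredIndicator

variable {m : Type*} [Fintype m] [DecidableEq m] (π : m → ℝ) (S : Finset m)

def centeredIndicator : m → ℝ := fun x => (if x ∈ S then 1 else 0) - ∑ y ∈ S, π y

variable {π}

lemma sum_mul_centeredIndicator (hπ : ∑ x, π x = 1) : ∑ x, π x * centeredIndicator π S x = 0 := by
  simp [centeredIndicator, mul_sub, Finset.sum_sub_distrib, ← Finset.sum_mul, hπ]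

lemma sum_mul_centeredIndicator_sq (hπ : ∑ x, π x = 1) :
    ∑ x, π x * centeredIndicator π S x ^ 2 = (∑ x ∈ S, π x) * (1 - ∑ x ∈ S, π x) := by
  set p := ∑ x ∈ S, π x
  have hterm : ∀ x, π x * centeredIndicator π S x ^ 2
      = (1 - 2 * p) * (π x * if x ∈ S then 1 else 0) + p ^ 2 * π x := by
    intro x; simp only [centeredIndicator]; split_ifs <;> ring
  simp only [hterm, Finset.sum_add_distrib, ← Finset.mul_sum, hπ]
  simp only [mul_ite, mul_one, mul_zero, Finset.sum_ite_mem, Finset.univ_inter, p]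
  ring

lemma sum_sum_mul_centeredIndicator_sub_sq (F : m → m → ℝ) :
    ∑ x, ∑ y, F x y * (centeredIndicator π S x - centeredIndicator π S y) ^ 2
      = ∑ x ∈ S, ∑ y ∈ Sᶜ, F x y + ∑ x ∈ Sᶜ, ∑ y ∈ S, F x y := by
  have hterm : ∀ x y, F x y * (centeredIndicator π S x - centeredIndicator π S y) ^ 2 =
      (if x ∈ S ∧ y ∈ Sᶜ then F x y else 0) + (if x ∈ Sᶜ ∧ y ∈ S then F x y else 0) := by
    intro x y
    simp only [centeredIndicator, sub_sub_sub_cancel_right]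
    by_cases hx : x ∈ S <;> by_cases hy : y ∈ S <;> simp [hx, hy]
  simp only [hterm, Finset.sum_add_distrib, ite_and, Finset.sum_ite_irrel, Finset.sum_const_zero,
    Finset.sum_ite_mem, Finset.univ_inter]

lemma sqrt_mul_centeredIndicator_dotProduct_self (hπ0 : ∀ x, 0 ≤ π x) (hπ : ∑ x, π x = 1) :
    (fun x => √(π x) * centeredIndicator π S x) ⬝ᵥ (fun x => √(π x) * centeredIndicator π S x)
      = (∑ x ∈ S, π x) * (1 - ∑ x ∈ S, π x) := by
  rw [sqrt_mul_dotProduct_sqrt_mul hπ0, ← sum_mul_centeredIndicator_sq S hπ]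
  simp only [sq]

lemma sqrt_mul_centeredIndicator_dotProduct_symmetrized_mulVec {P : Matrix m m ℝ}
    (hπ0 : ∀ x, 0 < π x) (hπ : ∑ x, π x = 1) (hP : P ∈ rowStochastic ℝ m)
    (hrev : ∀ x y, π x * P x y = π y * P y x) :
    (fun x => √(π x) * centeredIndicator π S x) ⬝ᵥ
        (symmetrized π P *ᵥ fun x => √(π x) * centeredIndicator π S x)
      = (∑ x ∈ S, π x) * (1 - ∑ x ∈ S, π x) - ∑ x ∈ S, ∑ y ∈ Sᶜ, π x * P x y := by
  have hflow : ∑ x ∈ Sᶜ, ∑ y ∈ S, π x * P x y = ∑ x ∈ S, ∑ y ∈ Sᶜ, π x * P x y := by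
    rw [Finset.sum_comm]
    exact Finset.sum_congr rfl fun y _ => Finset.sum_congr rfl fun x _ => hrev x y
  rw [sqrt_mul_dotProduct_symmetrized_mulVec hπ0 hP hrev, sum_mul_centeredIndicator_sq S hπ,
    sum_sum_mul_centeredIndicator_sub_sq, hflow]
  ring

end CenteredIndicator

/-- For an irreducible, reversible finite Markov chain with conductance `Φ`, the second
largest eigenvalue `λ₁` satisfies `λ₁ ≥ 1 - 2Φ`: there is an eigenvalue strictly less
than 1 (the second largest) which is at least `1 - 2Φ`. -/
theorem second_eigenvalue_ge_one_sub_two_conductance (n : ℕ)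
    (P : Matrix (Fin (n+2)) (Fin (n+2)) ℝ) (π : Fin (n+2) → ℝ)
    (hP : ∀ x y, 0 ≤ P x y) (hrow : ∀ x, ∑ y, P x y = 1)
    (hπpos : ∀ x, 0 < π x) (hπsum : ∑ x, π x = 1)
    (hrev : ∀ x y, π x * P x y = π y * P y x)
    (hirr : ∀ x y, ∃ k : ℕ, 0 < (P ^ k) x y)
    (Φ : ℝ)
    (hΦ : IsLeast {t : ℝ | ∃ S : Finset (Fin (n+2)),
      0 < ∑ x ∈ S, π x ∧ (∑ x ∈ S, π x) ≤ 1/2 ∧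
      t = (∑ x ∈ S, ∑ y ∈ Sᶜ, π x * P x y) / (∑ x ∈ S, π x)} Φ) :
    ∃ lam : ℝ, lam < 1 ∧ P.charpoly.IsRoot lam ∧ 1 - 2*Φ ≤ lam := by
  obtain ⟨S, hp, hp_half, hΦS⟩ := hΦ.1
  set p := ∑ x ∈ S, π x
  set Q := ∑ x ∈ S, ∑ y ∈ Sᶜ, π x * P x y
  have hstoch : P ∈ rowStochastic ℝ _ := mem_rowStochastic_iff_sum.2 ⟨hP, hrow⟩
  have hA := symmetrized_isHermitian hπpos hrev
  set f := fun x => √(π x) * centeredIndicator π S x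
  have hff : f ⬝ᵥ f = p * (1 - p) :=
    sqrt_mul_centeredIndicator_dotProduct_self S (fun x => (hπpos x).le) hπsum
  have hfAf : f ⬝ᵥ (symmetrized π P *ᵥ f) = p * (1 - p) - Q :=
    sqrt_mul_centeredIndicator_dotProduct_symmetrized_mulVec S hπpos hπsum hstoch hrev
  have hp_var : 0 < p * (1 - p) := mul_pos hp (by linarith)
  obtain ⟨i, hfi, hrayleigh⟩ :=
    hA.exists_eigenvalue_ge_rayleigh (f := f) fun h => hp_var.ne' (by rw [← hff, h, zero_dotProduct])
  have hu := hA.mulVec_eigenvectorBasis i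
  have heig := hasEigenvalue_toLin'_of_symmetrized_mulVec_eq_smul hπpos
    (fun h => hfi (by rw [h, zero_dotProduct])) hu
  refine ⟨_, (le_one_of_hasEigenvalue_of_mem_rowStochastic hstoch heig).lt_of_ne fun h1 => hfi ?_,
    by rwa [Module.End.hasEigenvalue_iff_isRoot_charpoly, charpoly_toLin'] at heig, ?_⟩
  · exact dotProduct_sqrt_mul_eq_zero_of_symmetrized_mulVec_eq_self hπpos hstoch hirr
      (by rw [hu, h1, one_smul]) (sum_mul_centeredIndicator S hπsum)
  · have hQ : Q = Φ * p := by rw [hΦS]; field_simp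
    have hΦ0 : 0 ≤ Φ := hΦS ▸ div_nonneg (Finset.sum_nonneg fun x _ => Finset.sum_nonneg
      fun y _ => mul_nonneg (hπpos x).le (hP x y)) hp.le
    refine le_of_mul_le_mul_right ?_ hp_var
    calc (1 - 2 * Φ) * (p * (1 - p)) ≤ p * (1 - p) - Q := by
          rw [hQ]; nlinarith [mul_nonneg hΦ0 hp.le]
      _ ≤ _ := hfAf ▸ hff ▸ hrayleigh
end
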